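/- Let a > 0, e ∈ [0,1), and E₁, E₂ ∈ ℝ. Let P(E) = (a(cos E − e), a√(1−e²) sin E) ∈ ℝ², r₁ = ‖P(E₁)‖, r₂ = ‖P(E₂)‖, d = ‖P(E₂) − P(E₁)‖. Then d ≤ r₁ + r₂ and r₁ + r₂ + d ≤ 4a; equivalently, both (r₁ + r₂ + d)/(4a) and (r₁ + r₂ − d)/(4a) lie in the interval [0, 1]. -/

import Mathlib

open Real

/-- Elliptic position at eccentric anomaly `E`, with the attracting focus at the origin. -/
noncomputable def ellP (a e E : ℝ) : EuclideanSpace ℝ (Fin 2) :=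
  (WithLp.equiv 2 (Fin 2 → ℝ)).symm
    ![a * (Real.cos E - e), a * Real.sqrt (1 - e ^ 2) * Real.sin E]

/-!
Besides the attracting focus at the origin, the ellipse has a second ("empty") focus `F'`
at `(-2ae, 0)`, and every point `P` of it satisfies the focal property `‖P‖ + ‖P - F'‖ = 2a`
(explicitly `‖P(E)‖ = a(1 - e cos E)` and `‖P(E) - F'‖ = a(1 + e cos E)`). The triangle
inequality through the origin gives `d ≤ r₁ + r₂`; through `F'` it gives
`d ≤ (2a - r₁) + (2a - r₂)`.
-/

noncomputable def ellEmptyFocus (a e : ℝ) : EuclideanSpace ℝ (Fin 2) :=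
  (WithLp.equiv 2 (Fin 2 → ℝ)).symm ![-2 * a * e, 0]

theorem norm_equiv_symm_pair (x y : ℝ) :
    ‖(WithLp.equiv 2 (Fin 2 → ℝ)).symm ![x, y]‖ = √(x ^ 2 + y ^ 2) := by
  simp [EuclideanSpace.norm_eq, Fin.sum_univ_two]

theorem norm_ellipse_pair {a e k : ℝ} (E : ℝ) (ha : 0 ≤ a) (he : |e| ≤ 1) (hk : |k| = |e|) :
    ‖(WithLp.equiv 2 (Fin 2 → ℝ)).symm ![a * (cos E + k), a * √(1 - e ^ 2) * sin E]‖ =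
      a * (1 + k * cos E) := by
  have hk2 : k ^ 2 = e ^ 2 := sq_eq_sq_iff_abs_eq_abs _ _ |>.2 hk
  have he2 : √(1 - e ^ 2) ^ 2 = 1 - e ^ 2 := sq_sqrt (by nlinarith [sq_abs e, abs_nonneg e])
  have hkc : |k * cos E| ≤ 1 := by
    rw [abs_mul, hk]; exact mul_le_one₀ he (abs_nonneg _) (abs_cos_le_one E)
  have hsq : (a * (cos E + k)) ^ 2 + (a * √(1 - e ^ 2) * sin E) ^ 2 =
      (a * (1 + k * cos E)) ^ 2 := by
    linear_combination (a ^ 2 * sin E ^ 2) * he2 + (a ^ 2 * (1 - k ^ 2)) * sin_sq_add_cos_sq E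
      + a ^ 2 * sin E ^ 2 * hk2
  rw [norm_equiv_symm_pair, hsq, sqrt_sq (mul_nonneg ha (by linarith [neg_le_of_abs_le hkc]))]

theorem norm_ellP {a e : ℝ} (E : ℝ) (ha : 0 ≤ a) (he : |e| ≤ 1) :
    ‖ellP a e E‖ = a * (1 - e * cos E) := by
  have h := norm_ellipse_pair E ha he (abs_neg e)
  rw [← sub_eq_add_neg] at h
  rw [ellP, h]; ring

theorem ellP_sub_ellEmptyFocus (a e E : ℝ) :
    ellP a e E - ellEmptyFocus a e =
      (WithLp.equiv 2 (Fin 2 → ℝ)).symm ![a * (cos E + e), a * √(1 - e ^ 2) * sin E] := by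
  ext i; fin_cases i <;> simp [ellP, ellEmptyFocus]; ring

theorem norm_ellP_sub_ellEmptyFocus {a e : ℝ} (E : ℝ) (ha : 0 ≤ a) (he : |e| ≤ 1) :
    ‖ellP a e E - ellEmptyFocus a e‖ = a * (1 + e * cos E) := by
  rw [ellP_sub_ellEmptyFocus, norm_ellipse_pair E ha he rfl]

theorem norm_ellP_add_norm_sub_ellEmptyFocus {a e : ℝ} (E : ℝ) (ha : 0 ≤ a) (he : |e| ≤ 1) :
    ‖ellP a e E‖ + ‖ellP a e E - ellEmptyFocus a e‖ = 2 * a := by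
  rw [norm_ellP E ha he, norm_ellP_sub_ellEmptyFocus E ha he]; ring

/-- Constraints satisfied by the focal distances, the chord and the semimajor axis. -/
theorem ellipse_constraints (a e E₁ E₂ : ℝ) (ha : 0 < a) (he0 : 0 ≤ e) (he1 : e < 1) :
    ‖ellP a e E₂ - ellP a e E₁‖ ≤ ‖ellP a e E₁‖ + ‖ellP a e E₂‖ ∧
    ‖ellP a e E₁‖ + ‖ellP a e E₂‖ + ‖ellP a e E₂ - ellP a e E₁‖ ≤ 4 * a := by
  have he : |e| ≤ 1 := abs_le.2 ⟨by linarith, he1.le⟩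
  refine ⟨(norm_sub_le _ _).trans_eq (add_comm _ _), ?_⟩
  have hchord :=
    norm_sub_le_norm_sub_add_norm_sub (ellP a e E₂) (ellEmptyFocus a e) (ellP a e E₁)
  rw [norm_sub_rev (ellEmptyFocus a e)] at hchord
  linarith [norm_ellP_add_norm_sub_ellEmptyFocus E₁ ha.le he,
    norm_ellP_add_norm_sub_ellEmptyFocus E₂ ha.le he]
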